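/- arXiv:1310.5371 — 2 statements merged into one kernel-verified Lean document; each statement's English description precedes it below -/
import Mathlib

section
/- There exists a constant c > 0, depending only on d, K₀, κ, α and ℓ, such that ψ(ξ) ≤ c L(|ξ|⁻¹) for all ξ ∈ ℝ^d with |ξ| ≥ 5. -/
open MeasureTheory Metric Set Filter
open scoped ENNReal Topology RealInnerProductSpace

noncomputable section

/-- `L(r) = ∫_r^1 ℓ(s)/s ds`. -/
def Lfun (ℓ : ℝ → ℝ) (r : ℝ) : ℝ := ∫ s in r..1, ℓ s / s

/-- `ℓ` varies regularly at `0+` with index `ρ`. -/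
def RegVaryAt0 (ℓ : ℝ → ℝ) (ρ : ℝ) : Prop :=
  ∀ lam : ℝ, 0 < lam →
    Filter.Tendsto (fun r => ℓ (lam * r) / ℓ r) (𝓝[>] (0 : ℝ)) (𝓝 (lam ^ ρ))

/-- `ℓ` is bounded away from `0` and `∞` on compact subsets of `(0,1)`. -/
def LocBddAway (ℓ : ℝ → ℝ) : Prop :=
  ∀ a b : ℝ, 0 < a → a ≤ b → b < 1 →
    ∃ m M : ℝ, 0 < m ∧ ∀ s : ℝ, a ≤ s → s ≤ b → m ≤ ℓ s ∧ ℓ s ≤ M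

/-- conditions on the (translation invariant) kernel `k`: measurability, nonnegativity,
symmetry, `∫ (1 ∧ |h|²) k(h) dh ≤ K₀` and `κ⁻¹ ℓ(|h|)|h|^{-d} ≤ k(h) ≤ κ ℓ(|h|)|h|^{-d}`
for `0 < |h| ≤ 1`. -/
def KernelCondsTI (d : ℕ) (K₀ κ : ℝ) (ℓ : ℝ → ℝ)
    (k : EuclideanSpace ℝ (Fin d) → ℝ) : Prop :=
  Measurable k ∧ (∀ h, 0 ≤ k h) ∧ (∀ h, k h = k (-h)) ∧
  ((∫⁻ h in ({0}ᶜ : Set (EuclideanSpace ℝ (Fin d))),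
      ENNReal.ofReal (min 1 (‖h‖ ^ 2) * k h)) ≤ ENNReal.ofReal K₀) ∧
  (∀ h : EuclideanSpace ℝ (Fin d), 0 < ‖h‖ → ‖h‖ ≤ 1 →
    κ⁻¹ * (ℓ ‖h‖ / ‖h‖ ^ d) ≤ k h ∧ k h ≤ κ * (ℓ ‖h‖ / ‖h‖ ^ d))

/-- the characteristic exponent `ψ(ξ) = ∫ (1 - cos⟨ξ,h⟩) k(h) dh`. -/
def psiFun (d : ℕ) (k : EuclideanSpace ℝ (Fin d) → ℝ)
    (ξ : EuclideanSpace ℝ (Fin d)) : ℝ :=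
  ∫ h in ({0}ᶜ : Set (EuclideanSpace ℝ (Fin d))), (1 - Real.cos ⟪ξ, h⟫) * k h

/-!
With `r = |ξ|⁻¹`, bound `1 - cos⟨ξ,h⟩` by `|ξ|²|h|²/2` for `|h| ≤ r` and by `2` otherwise. In
polar coordinates the three resulting pieces are at most `σ_d κ |ξ|²/2 · ∫₀ʳ sℓ(s) ds`,
`2σ_d κ L(r)` and `2K₀`, where `σ_d = d |B₁|` is the area of the unit sphere. Regular variation
at the single ratio `1/2` gives `ℓ(s/2) ≤ C ℓ(s)` with `C < 4` for small `s`, and the substitution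
`s ↦ s/2` turns this into `∫₀^{r/2} sℓ ≤ (C/4) ∫₀ʳ sℓ` and
`∫_{r/2}^r ℓ(s)/s ds ≤ C ∫_r^{2r} ℓ(s)/s ds`; absorbing the first term gives
`∫₀ʳ sℓ(s) ds ≤ 4C/(4-C) · r² L(r)`. The remaining range of `r ≤ 1/5` and the constant `2K₀` are
covered by `L(r) ≥ L(1/5) > 0`, using that `∫₀¹ sℓ(s) ds < ∞`, which the lower bound on `k`
together with `∫ (1 ∧ |h|²) k ≤ K₀` forces.
-/

section Polar

variable {E : Type*} [NormedAddCommGroup E] [NormedSpace ℝ E] [MeasurableSpace E] [BorelSpace E]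
  [FiniteDimensional ℝ E] [Nontrivial E] (μ : Measure E) [μ.IsAddHaarMeasure]

theorem lintegral_fun_norm_addHaar {f : ℝ → ℝ≥0∞} (hf : Measurable f) :
    ∫⁻ x, f ‖x‖ ∂μ = Module.finrank ℝ E * μ (ball 0 1) *
      ∫⁻ y in Ioi (0 : ℝ), ENNReal.ofReal (y ^ (Module.finrank ℝ E - 1)) * f y := by
  have hsnd : Measurable fun y : Ioi (0 : ℝ) => f y := hf.comp measurable_subtype_coe
  calc ∫⁻ x, f ‖x‖ ∂μ = ∫⁻ x : ({0}ᶜ : Set E), f ‖(x : E)‖ ∂μ.comap (↑) := by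
        rw [lintegral_subtype_comap (measurableSet_singleton _).compl (fun x : E => f ‖x‖),
          restrict_compl_singleton]
    _ = ∫⁻ x, f x.2 ∂μ.toSphere.prod (.volumeIoiPow (Module.finrank ℝ E - 1)) := by
        rw [← (μ.measurePreserving_homeomorphUnitSphereProd).lintegral_comp_emb
          (Homeomorph.measurableEmbedding _)]
        simp only [homeomorphUnitSphereProd_apply_snd_coe]
    _ = μ.toSphere univ * ∫⁻ y : Ioi (0 : ℝ), f y ∂.volumeIoiPow (Module.finrank ℝ E - 1) := by
        rw [lintegral_prod (fun x : sphere (0 : E) 1 × Ioi (0 : ℝ) => f x.2)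
          (hsnd.comp measurable_snd).aemeasurable]
        simp only [lintegral_const, mul_comm]
    _ = _ := by
        rw [μ.toSphere_apply_univ, Measure.volumeIoiPow, lintegral_withDensity_eq_lintegral_mul _
          (measurable_subtype_coe.pow_const _).ennreal_ofReal hsnd,
          ← lintegral_subtype_comap measurableSet_Ioi]
        rfl

end Polar

theorem natCast_mul_volume_ball_ne_zero (d : ℕ) [NeZero d] :
    (d : ℝ≥0∞) * volume (ball (0 : EuclideanSpace ℝ (Fin d)) 1) ≠ 0 :=
  mul_ne_zero (by simp [NeZero.ne d]) (measure_ball_pos volume 0 one_pos).ne'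

theorem lintegral_indicator_norm_euclideanSpace {d : ℕ} [NeZero d] {S : Set ℝ}
    (hS : MeasurableSet S) (hS₀ : S ⊆ Ioi 0) {g : ℝ → ℝ} (hg : Measurable g) :
    ∫⁻ h : EuclideanSpace ℝ (Fin d), S.indicator (fun s => ENNReal.ofReal (g s / s ^ (d - 1))) ‖h‖
      = d * volume (ball (0 : EuclideanSpace ℝ (Fin d)) 1) * ∫⁻ s in S, ENNReal.ofReal (g s) := by
  have hF : Measurable fun s => ENNReal.ofReal (g s / s ^ (d - 1)) := by fun_prop
  have hSIoi : ∫⁻ s in S, ENNReal.ofReal (g s)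
      = ∫⁻ s in Ioi 0, S.indicator (fun s => ENNReal.ofReal (g s)) s := by
    rw [setLIntegral_indicator hS, inter_eq_left.mpr hS₀]
  rw [lintegral_fun_norm_addHaar volume (hF.indicator hS), finrank_euclideanSpace_fin, hSIoi]
  congr 1
  refine setLIntegral_congr_fun measurableSet_Ioi fun s (hs : 0 < s) => ?_
  by_cases hsS : s ∈ S
  · simp only [indicator_of_mem hsS]
    rw [← ENNReal.ofReal_mul (by positivity), mul_div_cancel₀ _ (by positivity)]
  · simp [indicator_of_notMem hsS]

theorem lintegral_ofReal_const_mul {α : Type*} [MeasurableSpace α] (μ : Measure α) {c : ℝ}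
    (hc : 0 ≤ c) (f : α → ℝ) :
    ∫⁻ x, ENNReal.ofReal (c * f x) ∂μ = ENNReal.ofReal c * ∫⁻ x, ENNReal.ofReal (f x) ∂μ := by
  simp_rw [ENNReal.ofReal_mul hc]
  exact lintegral_const_mul' _ _ ENNReal.ofReal_ne_top

theorem one_sub_cos_inner_le {E : Type*} [NormedAddCommGroup E] [InnerProductSpace ℝ E]
    (ξ h : E) : 1 - Real.cos ⟪ξ, h⟫ ≤ ‖ξ‖ ^ 2 * ‖h‖ ^ 2 / 2 := by
  have hcos := Real.one_sub_sq_div_two_le_cos (x := ⟪ξ, h⟫)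
  have hinner : ⟪ξ, h⟫ ^ 2 ≤ (‖ξ‖ * ‖h‖) ^ 2 := by
    rw [← sq_abs]; exact pow_le_pow_left₀ (abs_nonneg _) (abs_real_inner_le_norm ξ h) 2
  rw [mul_pow] at hinner
  linarith

theorem lintegral_Ioc_half (f : ℝ → ℝ≥0∞) (a b : ℝ) :
    ∫⁻ s in Ioc (2⁻¹ * a) (2⁻¹ * b), f s = 2⁻¹ * ∫⁻ u in Ioc a b, f (2⁻¹ * u) := by
  rw [← image_mul_left_Ioc (by norm_num : (0 : ℝ) < 2⁻¹),
    lintegral_image_eq_lintegral_abs_deriv_mul measurableSet_Ioc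
      (fun u _ => ((hasDerivAt_id' u).const_mul 2⁻¹).hasDerivWithinAt)
      (mul_right_injective₀ (by norm_num)).injOn,
    lintegral_const_mul' _ _ ENNReal.ofReal_ne_top, mul_one, abs_of_pos (by norm_num),
    ENNReal.ofReal_inv_of_pos two_pos, ENNReal.ofReal_ofNat]

theorem lintegral_Ioc_half_le {f : ℝ → ℝ≥0∞} {a b c : ℝ}
    (h : ∀ u ∈ Ioc a b, f (2⁻¹ * u) ≤ ENNReal.ofReal c * f u) :
    ∫⁻ s in Ioc (2⁻¹ * a) (2⁻¹ * b), f s ≤ ENNReal.ofReal (c / 2) * ∫⁻ u in Ioc a b, f u := by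
  rw [lintegral_Ioc_half, ENNReal.ofReal_div_of_pos two_pos, ENNReal.ofReal_ofNat, div_eq_mul_inv,
    mul_comm _ 2⁻¹, mul_assoc, ← lintegral_const_mul' _ _ ENNReal.ofReal_ne_top]
  gcongr 2⁻¹ * ?_
  exact setLIntegral_mono' measurableSet_Ioc h

theorem RegVaryAt0.exists_le_mul {ℓ : ℝ → ℝ} {ρ lam C : ℝ} (hreg : RegVaryAt0 ℓ ρ)
    (hpos : ∀ s, 0 < s → s < 1 → 0 < ℓ s) (hlam : 0 < lam) (hC : lam ^ ρ < C) :
    ∃ t₀ ∈ Ioo (0 : ℝ) 1, ∀ s, 0 < s → s ≤ t₀ → ℓ (lam * s) ≤ C * ℓ s := by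
  have hev : ∀ᶠ s in 𝓝[>] (0 : ℝ), ℓ (lam * s) / ℓ s < C ∧ s < 1 :=
    ((hreg lam hlam).eventually (gt_mem_nhds hC)).and
      (nhdsWithin_le_nhds (gt_mem_nhds one_pos))
  obtain ⟨t₀, ht₀, hsub⟩ := mem_nhdsGT_iff_exists_Ioc_subset.mp hev
  refine ⟨t₀, ⟨ht₀, (hsub ⟨ht₀, le_rfl⟩).2⟩, fun s hs hst => ?_⟩
  obtain ⟨hlt, hs1⟩ := hsub ⟨hs, hst⟩
  exact ((div_lt_iff₀ (hpos s hs hs1)).mp hlt).le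

theorem lintegral_Ioc_mul_le_sq_mul_div (ℓ : ℝ → ℝ) {a b : ℝ} (ha : 0 ≤ a) :
    ∫⁻ s in Ioc a b, ENNReal.ofReal (s * ℓ s)
      ≤ ENNReal.ofReal (b ^ 2) * ∫⁻ s in Ioc a b, ENNReal.ofReal (ℓ s / s) := by
  rw [← lintegral_const_mul' _ _ ENNReal.ofReal_ne_top]
  refine setLIntegral_mono' measurableSet_Ioc fun s hs => ?_
  have hs₀ : 0 < s := ha.trans_lt hs.1
  calc ENNReal.ofReal (s * ℓ s) = ENNReal.ofReal (s ^ 2) * ENNReal.ofReal (ℓ s / s) := by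
        rw [← ENNReal.ofReal_mul (sq_nonneg s)]; congr 1; field_simp
    _ ≤ ENNReal.ofReal (b ^ 2) * ENNReal.ofReal (ℓ s / s) := by gcongr; exact hs.2

section Doubling

variable {ℓ : ℝ → ℝ} {t₀ C : ℝ}

theorem lintegral_Ioc_zero_half_mul_le (hC₀ : 0 ≤ C)
    (hC : ∀ s, 0 < s → s ≤ t₀ → ℓ (2⁻¹ * s) ≤ C * ℓ s) {r : ℝ} (hr : r ≤ t₀) :
    ∫⁻ s in Ioc 0 (2⁻¹ * r), ENNReal.ofReal (s * ℓ s)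
      ≤ ENNReal.ofReal (C / 4) * ∫⁻ s in Ioc 0 r, ENNReal.ofReal (s * ℓ s) := by
  have h := lintegral_Ioc_half_le (f := fun s => ENNReal.ofReal (s * ℓ s)) (a := 0) (b := r)
    (c := C / 2) fun u hu => by
      have hu₀ : 0 < u := hu.1
      rw [← ENNReal.ofReal_mul (by positivity)]
      refine ENNReal.ofReal_le_ofReal ?_
      calc 2⁻¹ * u * ℓ (2⁻¹ * u) ≤ 2⁻¹ * u * (C * ℓ u) := by
            gcongr; exact hC u hu₀ (hu.2.trans hr)
        _ = C / 2 * (u * ℓ u) := by ring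
  rwa [mul_zero, div_div, show (2 : ℝ) * 2 = 4 by norm_num] at h

theorem lintegral_Ioc_half_div_le (hC₀ : 0 ≤ C)
    (hC : ∀ s, 0 < s → s ≤ t₀ → ℓ (2⁻¹ * s) ≤ C * ℓ s) {r : ℝ} (hr₀ : 0 < r) (hr : 2 * r ≤ t₀) :
    ∫⁻ s in Ioc (2⁻¹ * r) r, ENNReal.ofReal (ℓ s / s)
      ≤ ENNReal.ofReal C * ∫⁻ s in Ioc r (2 * r), ENNReal.ofReal (ℓ s / s) := by
  have h := lintegral_Ioc_half_le (f := fun s => ENNReal.ofReal (ℓ s / s)) (a := r) (b := 2 * r)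
    (c := 2 * C) fun u hu => by
      have hu₀ : 0 < u := hr₀.trans hu.1
      rw [← ENNReal.ofReal_mul (by positivity)]
      refine ENNReal.ofReal_le_ofReal ?_
      calc ℓ (2⁻¹ * u) / (2⁻¹ * u) = 2 * ℓ (2⁻¹ * u) / u := by field_simp
        _ ≤ 2 * (C * ℓ u) / u := by gcongr; exact hC u hu₀ (hu.2.trans hr)
        _ = 2 * C * (ℓ u / u) := by ring
  rwa [← mul_assoc, inv_mul_cancel₀ two_ne_zero, one_mul, mul_div_cancel_left₀ _ two_ne_zero] at h

theorem lintegral_Ioc_mul_le (hC₀ : 0 ≤ C) (hC₄ : C < 4)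
    (hC : ∀ s, 0 < s → s ≤ t₀ → ℓ (2⁻¹ * s) ≤ C * ℓ s) {r : ℝ} (hr₀ : 0 < r) (hr : 2 * r ≤ t₀)
    (hfin : ∫⁻ s in Ioc 0 r, ENNReal.ofReal (s * ℓ s) ≠ ∞) :
    ENNReal.ofReal (r⁻¹ ^ 2) * ∫⁻ s in Ioc 0 r, ENNReal.ofReal (s * ℓ s)
      ≤ ENNReal.ofReal (4 * C / (4 - C)) * ∫⁻ s in Ioc r (2 * r), ENNReal.ofReal (ℓ s / s) := by
  have hsplit : ∫⁻ s in Ioc 0 r, ENNReal.ofReal (s * ℓ s)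
      = (∫⁻ s in Ioc 0 (2⁻¹ * r), ENNReal.ofReal (s * ℓ s))
        + ∫⁻ s in Ioc (2⁻¹ * r) r, ENNReal.ofReal (s * ℓ s) := by
    rw [← lintegral_union measurableSet_Ioc (Ioc_disjoint_Ioc_of_le (le_refl (2⁻¹ * r))),
      Ioc_union_Ioc_eq_Ioc (by positivity) (by linarith)]
  set M := ∫⁻ s in Ioc 0 r, ENNReal.ofReal (s * ℓ s)
  set N := ∫⁻ s in Ioc r (2 * r), ENNReal.ofReal (ℓ s / s)
  have hM : M ≤ ENNReal.ofReal (C / 4) * M + ENNReal.ofReal (r ^ 2 * C) * N :=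
    calc M = _ := hsplit
      _ ≤ ENNReal.ofReal (C / 4) * M
            + ENNReal.ofReal (r ^ 2) * ∫⁻ s in Ioc (2⁻¹ * r) r, ENNReal.ofReal (ℓ s / s) :=
          add_le_add (lintegral_Ioc_zero_half_mul_le hC₀ hC (by linarith))
            (lintegral_Ioc_mul_le_sq_mul_div ℓ (by positivity))
      _ ≤ ENNReal.ofReal (C / 4) * M + ENNReal.ofReal (r ^ 2) * (ENNReal.ofReal C * N) := by
          gcongr
          exact lintegral_Ioc_half_div_le hC₀ hC hr₀ hr
      _ = _ := by rw [ENNReal.ofReal_mul (sq_nonneg r), mul_assoc]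
  -- the absorption `M - (C/4) M = (1 - C/4) M` needs `M < ∞`
  have hM' : ENNReal.ofReal (1 - C / 4) * M ≤ ENNReal.ofReal (r ^ 2 * C) * N := by
    rw [ENNReal.ofReal_sub _ (by positivity), ENNReal.ofReal_one,
      ENNReal.sub_mul (fun _ _ => hfin), one_mul]
    exact tsub_le_iff_left.mpr hM
  have hC' : 0 < 1 - C / 4 := by linarith
  calc ENNReal.ofReal (r⁻¹ ^ 2) * M
      = ENNReal.ofReal (r⁻¹ ^ 2 / (1 - C / 4)) * (ENNReal.ofReal (1 - C / 4) * M) := by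
        rw [← mul_assoc, ← ENNReal.ofReal_mul (by positivity), div_mul_cancel₀ _ hC'.ne']
    _ ≤ ENNReal.ofReal (r⁻¹ ^ 2 / (1 - C / 4)) * (ENNReal.ofReal (r ^ 2 * C) * N) := by gcongr
    _ = ENNReal.ofReal (4 * C / (4 - C)) * N := by
        rw [← mul_assoc, ← ENNReal.ofReal_mul (by positivity)]
        congr 2
        field_simp

end Doubling

section Lfun

variable {ℓ : ℝ → ℝ}

theorem Lfun_eq_toReal_lintegral (hℓmeas : Measurable ℓ)
    (hℓpos : ∀ s, 0 < s → s < 1 → 0 < ℓ s) {r : ℝ} (hr₀ : 0 ≤ r) (hr₁ : r ≤ 1) :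
    Lfun ℓ r = (∫⁻ s in Ioo r 1, ENNReal.ofReal (ℓ s / s)).toReal := by
  rw [Lfun, intervalIntegral.integral_of_le hr₁, integral_Ioc_eq_integral_Ioo,
    integral_eq_lintegral_of_nonneg_ae _
      (by fun_prop : Measurable fun s => ℓ s / s).aestronglyMeasurable]
  refine ae_restrict_of_forall_mem measurableSet_Ioo fun s hs => ?_
  have hs₀ : 0 < s := hr₀.trans_lt hs.1
  exact (div_pos (hℓpos s hs₀ hs.2) hs₀).le

theorem lintegral_Ioo_div_ne_top (hM : ∫⁻ s in Ioc 0 1, ENNReal.ofReal (s * ℓ s) ≠ ∞) {r : ℝ}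
    (hr : 0 < r) : ∫⁻ s in Ioo r 1, ENNReal.ofReal (ℓ s / s) ≠ ∞ := by
  refine ne_top_of_le_ne_top
    (ENNReal.mul_ne_top (ENNReal.ofReal_ne_top : ENNReal.ofReal (r⁻¹ ^ 2) ≠ ∞) hM) ?_
  calc ∫⁻ s in Ioo r 1, ENNReal.ofReal (ℓ s / s)
      ≤ ∫⁻ s in Ioo r 1, ENNReal.ofReal (r⁻¹ ^ 2) * ENNReal.ofReal (s * ℓ s) := by
        refine setLIntegral_mono' measurableSet_Ioo fun s hs => ?_
        have hs₀ : 0 < s := hr.trans hs.1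
        calc ENNReal.ofReal (ℓ s / s) = ENNReal.ofReal (s⁻¹ ^ 2) * ENNReal.ofReal (s * ℓ s) := by
              rw [← ENNReal.ofReal_mul (by positivity)]; congr 1; field_simp
          _ ≤ ENNReal.ofReal (r⁻¹ ^ 2) * ENNReal.ofReal (s * ℓ s) := by
              gcongr; exact hs.1.le
    _ ≤ ∫⁻ s in Ioc 0 1, ENNReal.ofReal (r⁻¹ ^ 2) * ENNReal.ofReal (s * ℓ s) :=
        lintegral_mono_set fun s hs => ⟨hr.trans hs.1, hs.2.le⟩
    _ = _ := lintegral_const_mul' _ _ ENNReal.ofReal_ne_top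

theorem lintegral_Ioo_div_ne_zero (hℓmeas : Measurable ℓ)
    (hℓpos : ∀ s, 0 < s → s < 1 → 0 < ℓ s) {r : ℝ} (hr₀ : 0 ≤ r) (hr₁ : r < 1) :
    ∫⁻ s in Ioo r 1, ENNReal.ofReal (ℓ s / s) ≠ 0 := by
  refine ((setLIntegral_pos_iff (by fun_prop)).mpr ?_).ne'
  rw [inter_eq_right.mpr fun s hs => ?_, Real.volume_Ioo]
  · simpa using hr₁
  have hs₀ : 0 < s := hr₀.trans_lt hs.1
  exact (ENNReal.ofReal_pos.mpr (div_pos (hℓpos s hs₀ hs.2) hs₀)).ne'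

theorem exists_lintegral_Ioc_mul_le {ρ : ℝ} (hℓmeas : Measurable ℓ)
    (hℓpos : ∀ s, 0 < s → s < 1 → 0 < ℓ s) (hreg : RegVaryAt0 ℓ ρ) (hρ : -2 < ρ)
    (hM : ∫⁻ s in Ioc 0 1, ENNReal.ofReal (s * ℓ s) ≠ ∞) {r₁ : ℝ} (hr₁₀ : 0 < r₁) (hr₁ : r₁ < 1) :
    ∃ A ≠ ∞, ∀ r, 0 < r → r ≤ r₁ →
      ENNReal.ofReal (r⁻¹ ^ 2) * ∫⁻ s in Ioc 0 r, ENNReal.ofReal (s * ℓ s)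
        ≤ A * ∫⁻ s in Ioo r 1, ENNReal.ofReal (ℓ s / s) := by
  have h4 : (2⁻¹ : ℝ) ^ ρ < 4 := by
    rw [Real.inv_rpow zero_le_two, ← Real.rpow_neg zero_le_two]
    calc (2 : ℝ) ^ (-ρ) < 2 ^ (2 : ℝ) := Real.rpow_lt_rpow_of_exponent_lt one_lt_two (by linarith)
      _ = 4 := by norm_num
  obtain ⟨C, hC₁, hC₄⟩ := exists_between h4
  obtain ⟨t₀, ⟨ht₀, ht₀₁⟩, hC⟩ := hreg.exists_le_mul hℓpos (by norm_num) hC₁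
  have hC₀ : 0 ≤ C := (Real.rpow_nonneg (by norm_num) ρ).trans hC₁.le
  have hN₁ := lintegral_Ioo_div_ne_zero hℓmeas hℓpos hr₁₀.le hr₁
  set M := ∫⁻ s in Ioc 0 1, ENNReal.ofReal (s * ℓ s)
  set N₁ := ∫⁻ s in Ioo r₁ 1, ENNReal.ofReal (ℓ s / s)
  refine ⟨ENNReal.ofReal (4 * C / (4 - C)) + ENNReal.ofReal ((t₀ / 2)⁻¹ ^ 2) * (M / N₁),
    by finiteness, fun r hr₀ hr => ?_⟩
  rcases le_or_gt (2 * r) t₀ with hsmall | hlarge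
  · calc ENNReal.ofReal (r⁻¹ ^ 2) * ∫⁻ s in Ioc 0 r, ENNReal.ofReal (s * ℓ s)
        ≤ ENNReal.ofReal (4 * C / (4 - C)) * ∫⁻ s in Ioc r (2 * r), ENNReal.ofReal (ℓ s / s) :=
          lintegral_Ioc_mul_le hC₀ hC₄ hC hr₀ hsmall <| ne_top_of_le_ne_top hM <|
            lintegral_mono_set (Ioc_subset_Ioc_right (by linarith))
      _ ≤ ENNReal.ofReal (4 * C / (4 - C)) * ∫⁻ s in Ioo r 1, ENNReal.ofReal (ℓ s / s) := by
          gcongr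
          linarith
      _ ≤ _ := by gcongr; exact le_self_add
  · calc ENNReal.ofReal (r⁻¹ ^ 2) * ∫⁻ s in Ioc 0 r, ENNReal.ofReal (s * ℓ s)
        ≤ ENNReal.ofReal ((t₀ / 2)⁻¹ ^ 2) * M := by
          gcongr ENNReal.ofReal (?_⁻¹ ^ 2) * ?_
          · linarith
          · exact lintegral_mono_set (Ioc_subset_Ioc_right (by linarith))
      _ = ENNReal.ofReal ((t₀ / 2)⁻¹ ^ 2) * (M / N₁) * N₁ := by
          rw [mul_assoc, ENNReal.div_mul_cancel hN₁ (lintegral_Ioo_div_ne_top hM hr₁₀)]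
      _ ≤ _ := by
          gcongr
          · exact le_add_self
          · exact lintegral_mono_set (Ioo_subset_Ioo_left hr)

end Lfun

section Kernel

variable {d : ℕ} [NeZero d] {K₀ κ : ℝ} {ℓ : ℝ → ℝ} {k : EuclideanSpace ℝ (Fin d) → ℝ}

theorem KernelCondsTI.psiFun_eq_toReal_lintegral (hk : KernelCondsTI d K₀ κ ℓ k)
    (ξ : EuclideanSpace ℝ (Fin d)) :
    psiFun d k ξ = (∫⁻ h, ENNReal.ofReal ((1 - Real.cos ⟪ξ, h⟫) * k h)).toReal := by
  rw [psiFun, restrict_compl_singleton, integral_eq_lintegral_of_nonneg_ae]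
  · exact ae_of_all _ fun h => mul_nonneg (by linarith [Real.cos_le_one ⟪ξ, h⟫]) (hk.2.1 h)
  · exact (by fun_prop : Continuous fun h => 1 - Real.cos ⟪ξ, h⟫).aestronglyMeasurable.mul
      hk.1.aestronglyMeasurable

theorem KernelCondsTI.ofReal_one_sub_cos_mul_le (hk : KernelCondsTI d K₀ κ ℓ k)
    (ξ h : EuclideanSpace ℝ (Fin d)) (r : ℝ) :
    ENNReal.ofReal ((1 - Real.cos ⟪ξ, h⟫) * k h)
      ≤ (Ioc 0 r).indicator
            (fun s => ENNReal.ofReal (κ * ‖ξ‖ ^ 2 / 2 * (s * ℓ s) / s ^ (d - 1))) ‖h‖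
        + (Ioo r 1).indicator (fun s => ENNReal.ofReal (2 * κ * (ℓ s / s) / s ^ (d - 1))) ‖h‖
        + 2 * ENNReal.ofReal (min 1 (‖h‖ ^ 2) * k h) := by
  obtain ⟨-, hk₀, -, -, hkℓ⟩ := hk
  rcases eq_or_ne h 0 with rfl | hh
  · simp
  have hn : 0 < ‖h‖ := norm_pos_iff.mpr hh
  have hcos : 1 - Real.cos ⟪ξ, h⟫ ≤ 2 := by linarith [Real.neg_one_le_cos ⟪ξ, h⟫]
  have hpow : ‖h‖ ^ d = ‖h‖ ^ (d - 1) * ‖h‖ := (pow_sub_one_mul (NeZero.ne d) _).symm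
  rcases le_or_gt 1 ‖h‖ with h1 | h1
  · rw [min_eq_left (one_le_pow₀ h1), one_mul]
    refine le_add_left ?_
    calc ENNReal.ofReal ((1 - Real.cos ⟪ξ, h⟫) * k h) ≤ ENNReal.ofReal (2 * k h) :=
          ENNReal.ofReal_le_ofReal (mul_le_mul_of_nonneg_right hcos (hk₀ h))
      _ = 2 * ENNReal.ofReal (k h) := by rw [ENNReal.ofReal_mul zero_le_two, ENNReal.ofReal_ofNat]
  have hkh := (hkℓ h hn h1.le).2
  rcases le_or_gt ‖h‖ r with hr' | hr'
  · rw [indicator_of_mem (show ‖h‖ ∈ Ioc 0 r from ⟨hn, hr'⟩)]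
    refine le_add_right (le_add_right (ENNReal.ofReal_le_ofReal ?_))
    calc (1 - Real.cos ⟪ξ, h⟫) * k h ≤ ‖ξ‖ ^ 2 * ‖h‖ ^ 2 / 2 * (κ * (ℓ ‖h‖ / ‖h‖ ^ d)) :=
          mul_le_mul (one_sub_cos_inner_le ξ h) hkh (hk₀ h) (by positivity)
      _ = _ := by rw [hpow]; field_simp
  · rw [indicator_of_mem (show ‖h‖ ∈ Ioo r 1 from ⟨hr', h1⟩)]
    refine le_add_right (le_add_left (ENNReal.ofReal_le_ofReal ?_))
    calc (1 - Real.cos ⟪ξ, h⟫) * k h ≤ 2 * (κ * (ℓ ‖h‖ / ‖h‖ ^ d)) :=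
          mul_le_mul hcos hkh (hk₀ h) zero_le_two
      _ = _ := by rw [hpow]; field_simp

theorem KernelCondsTI.lintegral_one_sub_cos_mul_le (hk : KernelCondsTI d K₀ κ ℓ k)
    (hℓmeas : Measurable ℓ) (ξ : EuclideanSpace ℝ (Fin d)) {r : ℝ} (hr : 0 ≤ r) (hκ : 0 ≤ κ) :
    ∫⁻ h, ENNReal.ofReal ((1 - Real.cos ⟪ξ, h⟫) * k h)
      ≤ d * volume (ball (0 : EuclideanSpace ℝ (Fin d)) 1) *
          (ENNReal.ofReal (κ * ‖ξ‖ ^ 2 / 2) * (∫⁻ s in Ioc 0 r, ENNReal.ofReal (s * ℓ s))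
            + ENNReal.ofReal (2 * κ) * ∫⁻ s in Ioo r 1, ENNReal.ofReal (ℓ s / s))
        + 2 * ENNReal.ofReal K₀ := by
  have hkmeas := hk.1
  have hfar : Measurable fun h : EuclideanSpace ℝ (Fin d) =>
      ENNReal.ofReal (min 1 (‖h‖ ^ 2) * k h) := by fun_prop
  have hmid : Measurable fun h : EuclideanSpace ℝ (Fin d) =>
      (Ioo r 1).indicator (fun s => ENNReal.ofReal (2 * κ * (ℓ s / s) / s ^ (d - 1))) ‖h‖ :=
    ((by fun_prop : Measurable fun s => ENNReal.ofReal (2 * κ * (ℓ s / s) / s ^ (d - 1))).indicator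
      measurableSet_Ioo).comp measurable_norm
  calc ∫⁻ h, ENNReal.ofReal ((1 - Real.cos ⟪ξ, h⟫) * k h)
      ≤ ∫⁻ h, ((Ioc 0 r).indicator
            (fun s => ENNReal.ofReal (κ * ‖ξ‖ ^ 2 / 2 * (s * ℓ s) / s ^ (d - 1))) ‖h‖
          + (Ioo r 1).indicator (fun s => ENNReal.ofReal (2 * κ * (ℓ s / s) / s ^ (d - 1))) ‖h‖
          + 2 * ENNReal.ofReal (min 1 (‖h‖ ^ 2) * k h)) :=
        lintegral_mono fun h => hk.ofReal_one_sub_cos_mul_le ξ h r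
    _ = d * volume (ball (0 : EuclideanSpace ℝ (Fin d)) 1) *
          (ENNReal.ofReal (κ * ‖ξ‖ ^ 2 / 2) * (∫⁻ s in Ioc 0 r, ENNReal.ofReal (s * ℓ s))
            + ENNReal.ofReal (2 * κ) * ∫⁻ s in Ioo r 1, ENNReal.ofReal (ℓ s / s))
        + 2 * ∫⁻ h, ENNReal.ofReal (min 1 (‖h‖ ^ 2) * k h) := by
        rw [lintegral_add_right _ (hfar.const_mul 2), lintegral_add_right _ hmid,
          lintegral_const_mul _ hfar,
          lintegral_indicator_norm_euclideanSpace measurableSet_Ioc (fun s hs => hs.1)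
            (by fun_prop),
          lintegral_indicator_norm_euclideanSpace measurableSet_Ioo
            (fun s hs => hr.trans_lt hs.1) (by fun_prop),
          lintegral_ofReal_const_mul _ (by positivity),
          lintegral_ofReal_const_mul _ (by positivity),
          mul_add]
    _ ≤ _ := by
        gcongr
        simpa only [restrict_compl_singleton] using hk.2.2.2.1

theorem KernelCondsTI.lintegral_Ioc_mul_ne_top (hk : KernelCondsTI d K₀ κ ℓ k)
    (hℓmeas : Measurable ℓ) (hκ : 0 < κ) : ∫⁻ s in Ioc 0 1, ENNReal.ofReal (s * ℓ s) ≠ ∞ := by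
  obtain ⟨-, hk₀, -, hkK, hkℓ⟩ := hk
  have hle : d * volume (ball (0 : EuclideanSpace ℝ (Fin d)) 1) *
      (ENNReal.ofReal κ⁻¹ * ∫⁻ s in Ioc 0 1, ENNReal.ofReal (s * ℓ s)) ≤ ENNReal.ofReal K₀ :=
    calc _ = ∫⁻ h : EuclideanSpace ℝ (Fin d),
          (Ioc 0 1).indicator (fun s => ENNReal.ofReal (κ⁻¹ * (s * ℓ s) / s ^ (d - 1))) ‖h‖ := by
          rw [lintegral_indicator_norm_euclideanSpace measurableSet_Ioc (fun s hs => hs.1)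
            (by fun_prop), lintegral_ofReal_const_mul _ (inv_nonneg.mpr hκ.le)]
      _ ≤ ∫⁻ h : EuclideanSpace ℝ (Fin d), ENNReal.ofReal (min 1 (‖h‖ ^ 2) * k h) := by
          refine lintegral_mono fun h => ?_
          by_cases hh : ‖h‖ ∈ Ioc 0 1
          · rw [indicator_of_mem hh, min_eq_right (pow_le_one₀ (norm_nonneg h) hh.2)]
            refine ENNReal.ofReal_le_ofReal ?_
            calc κ⁻¹ * (‖h‖ * ℓ ‖h‖) / ‖h‖ ^ (d - 1) = ‖h‖ ^ 2 * (κ⁻¹ * (ℓ ‖h‖ / ‖h‖ ^ d)) := by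
                  rw [← pow_sub_one_mul (NeZero.ne d)]; field_simp
              _ ≤ ‖h‖ ^ 2 * k h := by gcongr; exact (hkℓ h hh.1 hh.2).1
          · rw [indicator_of_notMem hh]
            exact zero_le
      _ ≤ ENNReal.ofReal K₀ := by simpa only [restrict_compl_singleton] using hkK
  intro htop
  rw [htop, ENNReal.mul_top (by simpa using hκ),
    ENNReal.mul_top (natCast_mul_volume_ball_ne_zero d), top_le_iff] at hle
  exact ENNReal.ofReal_ne_top hle

end Kernel

theorem exists_lintegral_one_sub_cos_mul_le {d : ℕ} [NeZero d] {K₀ κ ρ r₁ : ℝ} {ℓ : ℝ → ℝ}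
    (hκ : 0 < κ) (hℓmeas : Measurable ℓ) (hℓpos : ∀ s, 0 < s → s < 1 → 0 < ℓ s)
    (hreg : RegVaryAt0 ℓ ρ) (hρ : -2 < ρ)
    (hM : ∫⁻ s in Ioc 0 1, ENNReal.ofReal (s * ℓ s) ≠ ∞) (hr₁₀ : 0 < r₁) (hr₁ : r₁ < 1) :
    ∃ c ≠ 0, c ≠ ∞ ∧ ∀ k : EuclideanSpace ℝ (Fin d) → ℝ, KernelCondsTI d K₀ κ ℓ k →
      ∀ ξ : EuclideanSpace ℝ (Fin d), 0 < ‖ξ‖ → ‖ξ‖⁻¹ ≤ r₁ →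
        ∫⁻ h, ENNReal.ofReal ((1 - Real.cos ⟪ξ, h⟫) * k h)
          ≤ c * ∫⁻ s in Ioo ‖ξ‖⁻¹ 1, ENNReal.ofReal (ℓ s / s) := by
  obtain ⟨A, hA, hAr⟩ := exists_lintegral_Ioc_mul_le hℓmeas hℓpos hreg hρ hM hr₁₀ hr₁
  set σ := (d : ℝ≥0∞) * volume (ball (0 : EuclideanSpace ℝ (Fin d)) 1)
  set N : ℝ → ℝ≥0∞ := fun r => ∫⁻ s in Ioo r 1, ENNReal.ofReal (ℓ s / s)
  have hN₁ : N r₁ ≠ 0 := lintegral_Ioo_div_ne_zero hℓmeas hℓpos hr₁₀.le hr₁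
  have hσ : σ ≠ 0 := natCast_mul_volume_ball_ne_zero d
  refine ⟨σ * (ENNReal.ofReal (κ / 2) * A + ENNReal.ofReal (2 * κ)) + 2 * ENNReal.ofReal K₀ / N r₁,
    by positivity, by finiteness, fun k hk ξ hξ hr => ?_⟩
  have hr₀ : 0 < ‖ξ‖⁻¹ := inv_pos.mpr hξ
  calc _ ≤ σ * (ENNReal.ofReal (κ * ‖ξ‖ ^ 2 / 2) *
            (∫⁻ s in Ioc 0 ‖ξ‖⁻¹, ENNReal.ofReal (s * ℓ s)) + ENNReal.ofReal (2 * κ) * N ‖ξ‖⁻¹)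
          + 2 * ENNReal.ofReal K₀ :=
        hk.lintegral_one_sub_cos_mul_le hℓmeas ξ hr₀.le hκ.le
    _ ≤ σ * (ENNReal.ofReal (κ / 2) * (A * N ‖ξ‖⁻¹) + ENNReal.ofReal (2 * κ) * N ‖ξ‖⁻¹)
          + 2 * ENNReal.ofReal K₀ / N r₁ * N ‖ξ‖⁻¹ := by
        gcongr _ * (?_ + _) + ?_
        · rw [show κ * ‖ξ‖ ^ 2 / 2 = κ / 2 * ‖ξ‖⁻¹⁻¹ ^ 2 by rw [inv_inv]; ring,
            ENNReal.ofReal_mul (by positivity), mul_assoc]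
          exact mul_le_mul_right (hAr _ hr₀ hr) _
        · calc 2 * ENNReal.ofReal K₀ = 2 * ENNReal.ofReal K₀ / N r₁ * N r₁ :=
                (ENNReal.div_mul_cancel hN₁ (lintegral_Ioo_div_ne_top hM hr₁₀)).symm
            _ ≤ _ := by gcongr; exact lintegral_mono_set (Ioo_subset_Ioo_left hr)
    _ = _ := by ring

theorem statement3_general (d : ℕ) (hd : 1 ≤ d) (K₀ κ α : ℝ) (hκ : 1 < κ)
    (hα₂ : α < 2) (ℓ : ℝ → ℝ) (hℓmeas : Measurable ℓ)
    (hℓpos : ∀ s : ℝ, 0 < s → s < 1 → 0 < ℓ s)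
    (hℓreg : RegVaryAt0 ℓ (-α)) :
    ∃ c : ℝ, 0 < c ∧
      ∀ k : EuclideanSpace ℝ (Fin d) → ℝ, KernelCondsTI d K₀ κ ℓ k →
        ∀ ξ : EuclideanSpace ℝ (Fin d), 5 ≤ ‖ξ‖ →
          psiFun d k ξ ≤ c * Lfun ℓ (‖ξ‖⁻¹) := by
  have : NeZero d := ⟨by omega⟩
  have hκ₀ : 0 < κ := by linarith
  rcases eq_or_ne (∫⁻ s in Ioc 0 1, ENNReal.ofReal (s * ℓ s)) ∞ with hM | hM
  · exact ⟨1, one_pos, fun k hk => absurd hM (hk.lintegral_Ioc_mul_ne_top hℓmeas hκ₀)⟩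
  obtain ⟨c, hc₀, hc, hψ⟩ := exists_lintegral_one_sub_cos_mul_le (d := d) (K₀ := K₀) (r₁ := 5⁻¹)
    hκ₀ hℓmeas hℓpos hℓreg (by linarith) hM (by norm_num) (by norm_num)
  refine ⟨c.toReal, ENNReal.toReal_pos hc₀ hc, fun k hk ξ hξ => ?_⟩
  have hr₀ : 0 < ‖ξ‖⁻¹ := inv_pos.mpr (by linarith)
  have hr : ‖ξ‖⁻¹ ≤ 5⁻¹ := inv_anti₀ (by norm_num) hξ
  rw [hk.psiFun_eq_toReal_lintegral, Lfun_eq_toReal_lintegral hℓmeas hℓpos hr₀.le (by linarith),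
    ← ENNReal.toReal_mul]
  exact ENNReal.toReal_mono (ENNReal.mul_ne_top hc (lintegral_Ioo_div_ne_top hM hr₀))
    (hψ k hk ξ (by linarith) hr)

/-- There exists `c > 0`, depending only on `d, K₀, κ, α, ℓ`, such that
`ψ(ξ) ≤ c L(|ξ|⁻¹)` for all `ξ ∈ ℝ^d` with `|ξ| ≥ 5`. -/
theorem statement3 (d : ℕ) (hd : 1 ≤ d) (K₀ κ α : ℝ) (hK₀ : 0 < K₀) (hκ : 1 < κ)
    (hα₀ : 0 ≤ α) (hα₂ : α < 2) (ℓ : ℝ → ℝ) (hℓmeas : Measurable ℓ)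
    (hℓpos : ∀ s : ℝ, 0 < s → s < 1 → 0 < ℓ s)
    (hℓbdd : LocBddAway ℓ) (hℓreg : RegVaryAt0 ℓ (-α)) :
    ∃ c : ℝ, 0 < c ∧
      ∀ k : EuclideanSpace ℝ (Fin d) → ℝ, KernelCondsTI d K₀ κ ℓ k →
        ∀ ξ : EuclideanSpace ℝ (Fin d), 5 ≤ ‖ξ‖ →
          psiFun d k ξ ≤ c * Lfun ℓ (‖ξ‖⁻¹) :=
  statement3_general d hd K₀ κ α hκ hα₂ ℓ hℓmeas hℓpos hℓreg
end
end

section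
/- Let a > 1, b ∈ (1,a), γ = (ln b)/(ln a) ∈ (0,1), r ∈ (0,1/2) and x ∈ ℝ^d, and set r_n = L⁻¹( a^{n−1} L(r/2) ) for each integer n ≥ 1. If u : ℝ^d → ℝ is bounded and satisfies sup_{B_{r_n}(x)} u − inf_{B_{r_n}(x)} u ≤ 3 ‖u‖_∞ b^{−(n−1)} for every n ≥ 1, then for every y ∈ ℝ^d with 0 < |y − x| < r/2 one has |u(y) − u(x)| ≤ 3 b ‖u‖_∞ ( L(|x−y|) / L(r/2) )^{−γ}. -/
open Set Metric

/-! The ratio `t = L(|x-y|)/L(r/2) > 1` lies in some window `a^n < t ≤ a^(n+1)`. Since `L` is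
decreasing, `L(r_{n+1}) = a^n L(r/2) < L(|x-y|)` puts `y` in the ball `B_{r_{n+1}}(x)`, where the
oscillation of `u` is at most `3‖u‖_∞ b^{-n} = 3b‖u‖_∞ (a^(n+1))^{-γ} ≤ 3b‖u‖_∞ t^{-γ}`, because
`a^γ = b`. -/

theorem abs_sub_le_csSup_sub_csInf {α : Type*} {f : α → ℝ} {s : Set α} {M : ℝ}
    (hf : ∀ z, |f z| ≤ M) {x y : α} (hx : x ∈ s) (hy : y ∈ s) :
    |f y - f x| ≤ sSup (f '' s) - sInf (f '' s) := by
  have hbddAbove : BddAbove (f '' s) :=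
    ⟨M, by rintro _ ⟨z, -, rfl⟩; exact (le_abs_self _).trans (hf z)⟩
  have hbddBelow : BddBelow (f '' s) :=
    ⟨-M, by rintro _ ⟨z, -, rfl⟩; exact (neg_le_neg (hf z)).trans (neg_abs_le _)⟩
  have hsup : ∀ z ∈ s, f z ≤ sSup (f '' s) := fun z hz => le_csSup hbddAbove ⟨z, hz, rfl⟩
  have hinf : ∀ z ∈ s, sInf (f '' s) ≤ f z := fun z hz => csInf_le hbddBelow ⟨z, hz, rfl⟩
  rw [abs_sub_le_iff]
  constructor <;> linarith [hsup x hx, hsup y hy, hinf x hx, hinf y hy]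

theorem exists_pow_lt_le_pow_succ {a t : ℝ} (ha : 1 < a) (ht : 1 < t) :
    ∃ n : ℕ, a ^ n < t ∧ t ≤ a ^ (n + 1) := by
  classical
  have hex : ∃ m : ℕ, t ≤ a ^ m := (pow_unbounded_of_one_lt t ha).imp fun _ => le_of_lt
  obtain ⟨n, hn⟩ : ∃ n, Nat.find hex = n + 1 :=
    Nat.exists_eq_succ_of_ne_zero fun h => by
      have := Nat.find_spec hex
      rw [h, pow_zero] at this
      linarith
  refine ⟨n, ?_, hn ▸ Nat.find_spec hex⟩
  exact not_le.1 (Nat.find_min hex (by omega))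

theorem rpow_log_div_log {a b : ℝ} (ha : 1 < a) (hb : 0 < b) :
    a ^ (Real.log b / Real.log a) = b := by
  rw [Real.log_div_log]
  exact Real.rpow_logb (by linarith) ha.ne' hb

theorem inv_pow_le_rpow_neg_log_div_log {a b t : ℝ} (ha : 1 < a) (hb : 1 ≤ b) (ht : 0 < t)
    {n : ℕ} (htn : t ≤ a ^ n) :
    (b ^ n)⁻¹ ≤ t ^ (-(Real.log b / Real.log a)) := by
  have hγ : 0 ≤ Real.log b / Real.log a :=
    div_nonneg (Real.log_nonneg hb) (Real.log_nonneg ha.le)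
  have ha₀ : 0 ≤ a := by linarith
  rw [Real.rpow_neg ht.le]
  refine inv_anti₀ (Real.rpow_pos_of_pos ht _) ?_
  calc t ^ (Real.log b / Real.log a) ≤ (a ^ n) ^ (Real.log b / Real.log a) :=
        Real.rpow_le_rpow ht.le htn hγ
    _ = b ^ n := by
        rw [← Real.rpow_natCast a n, ← Real.rpow_mul ha₀, mul_comm, Real.rpow_mul ha₀,
          rpow_log_div_log ha (by linarith), Real.rpow_natCast]

theorem StrictAntiOn.lt_rightInv_of_lt_apply {L Linv : ℝ → ℝ} {s : Set ℝ}
    (hLanti : StrictAntiOn L s) (hLinv : ∀ y : ℝ, 0 < y → Linv y ∈ s ∧ L (Linv y) = y)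
    {ρ c : ℝ} (hρ : ρ ∈ s) (hc : 0 < c) (hcρ : c < L ρ) : ρ < Linv c := by
  obtain ⟨hmem, hLc⟩ := hLinv c hc
  exact (hLanti.lt_iff_gt hmem hρ).1 (by rwa [hLc])

theorem statement15_general (d : ℕ)
    (L Linv : ℝ → ℝ)
    (hLpos : ∀ s ∈ Set.Ioo (0:ℝ) 1, 0 < L s)
    (hLanti : StrictAntiOn L (Set.Ioo (0:ℝ) 1))
    (hLinv₂ : ∀ y : ℝ, 0 < y → Linv y ∈ Set.Ioo (0:ℝ) 1 ∧ L (Linv y) = y)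
    (a b r : ℝ) (ha : 1 < a) (hb₁ : 1 < b)
    (hr₁ : r < 1 / 2)
    (x : EuclideanSpace ℝ (Fin d))
    (u : EuclideanSpace ℝ (Fin d) → ℝ) (hu : ∃ M₀ : ℝ, ∀ z, |u z| ≤ M₀)
    (hosc : ∀ n : ℕ, 1 ≤ n →
      sSup (u '' Metric.ball x (Linv (a ^ (n - 1) * L (r / 2))))
          - sInf (u '' Metric.ball x (Linv (a ^ (n - 1) * L (r / 2))))
        ≤ 3 * (⨆ z, |u z|) * (b ^ (n - 1))⁻¹) :
    ∀ y : EuclideanSpace ℝ (Fin d), 0 < ‖y - x‖ → ‖y - x‖ < r / 2 →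
      |u y - u x| ≤ 3 * b * (⨆ z, |u z|) *
        (L ‖x - y‖ / L (r / 2)) ^ (-(Real.log b / Real.log a)) := by
  intro y hy₀ hy₁
  rw [norm_sub_rev x y]
  have hρ : ‖y - x‖ ∈ Ioo (0 : ℝ) 1 := ⟨hy₀, by linarith⟩
  have hr : r / 2 ∈ Ioo (0 : ℝ) 1 := ⟨by linarith, by linarith⟩
  have hLr := hLpos _ hr
  have hratio : 1 < L ‖y - x‖ / L (r / 2) := (one_lt_div hLr).2 (hLanti hρ hr hy₁)
  obtain ⟨n, hlt, hle⟩ := exists_pow_lt_le_pow_succ ha hratio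
  have hy : y ∈ ball x (Linv (a ^ n * L (r / 2))) :=
    mem_ball_iff_norm.2 <| hLanti.lt_rightInv_of_lt_apply hLinv₂ hρ (by positivity)
      ((lt_div_iff₀ hLr).1 hlt)
  obtain ⟨M₀, hM₀⟩ := hu
  have hM : 0 ≤ ⨆ z, |u z| := Real.iSup_nonneg fun z => abs_nonneg (u z)
  calc |u y - u x| ≤ 3 * (⨆ z, |u z|) * (b ^ n)⁻¹ := by
        refine (abs_sub_le_csSup_sub_csInf hM₀ (mem_ball_self ?_) hy).trans ?_
        · exact (hLinv₂ _ (by positivity)).1.1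
        · simpa using hosc (n + 1) (by omega)
    _ = 3 * b * (⨆ z, |u z|) * (b ^ (n + 1))⁻¹ := by
        field_simp
        ring
    _ ≤ 3 * b * (⨆ z, |u z|) * (L ‖y - x‖ / L (r / 2)) ^ (-(Real.log b / Real.log a)) := by
        gcongr
        exact inv_pow_le_rpow_neg_log_div_log ha hb₁.le (by linarith) hle

/-- Let `L : (0,1) → (0,∞)` be a continuous strictly decreasing
bijection onto `(0,∞)` with inverse `L⁻¹ = Linv`. Let `a > 1`, `b ∈ (1,a)`,
`γ = (ln b)/(ln a)`, `r ∈ (0,1/2)`, `x ∈ ℝ^d`, and set `r_n = L⁻¹(a^{n-1} L(r/2))` for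
`n ≥ 1`. If `u` is bounded and `sup_{B_{r_n}(x)} u - inf_{B_{r_n}(x)} u ≤ 3‖u‖_∞ b^{-(n-1)}`
for every `n ≥ 1`, then for every `y` with `0 < |y-x| < r/2`,
`|u(y) - u(x)| ≤ 3 b ‖u‖_∞ (L(|x-y|)/L(r/2))^{-γ}`. -/
theorem statement15 (d : ℕ) (hd : 1 ≤ d)
    (L Linv : ℝ → ℝ)
    (hLpos : ∀ s ∈ Set.Ioo (0:ℝ) 1, 0 < L s)
    (hLanti : StrictAntiOn L (Set.Ioo (0:ℝ) 1))
    (hLcont : ContinuousOn L (Set.Ioo (0:ℝ) 1))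
    (hLinv₁ : ∀ r ∈ Set.Ioo (0:ℝ) 1, Linv (L r) = r)
    (hLinv₂ : ∀ y : ℝ, 0 < y → Linv y ∈ Set.Ioo (0:ℝ) 1 ∧ L (Linv y) = y)
    (a b r : ℝ) (ha : 1 < a) (hb₁ : 1 < b) (hb₂ : b < a)
    (hr₀ : 0 < r) (hr₁ : r < 1 / 2)
    (x : EuclideanSpace ℝ (Fin d))
    (u : EuclideanSpace ℝ (Fin d) → ℝ) (hu : ∃ M₀ : ℝ, ∀ z, |u z| ≤ M₀)
    (hosc : ∀ n : ℕ, 1 ≤ n →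
      sSup (u '' Metric.ball x (Linv (a ^ (n - 1) * L (r / 2))))
          - sInf (u '' Metric.ball x (Linv (a ^ (n - 1) * L (r / 2))))
        ≤ 3 * (⨆ z, |u z|) * (b ^ (n - 1))⁻¹) :
    ∀ y : EuclideanSpace ℝ (Fin d), 0 < ‖y - x‖ → ‖y - x‖ < r / 2 →
      |u y - u x| ≤ 3 * b * (⨆ z, |u z|) *
        (L ‖x - y‖ / L (r / 2)) ^ (-(Real.log b / Real.log a)) :=
  statement15_general d L Linv hLpos hLanti hLinv₂ a b r ha hb₁ hr₁ x u hu hosc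
end
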